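/- Let m be a positive integer and a_1, …, a_{2m} distinct real numbers. On ℝ^{2m} × ℝ^{2m} (coordinates x = (x_1,…,x_{2m}), y = (y_1,…,y_{2m})) define M_{jk}(x,y) := (x_j y_k − x_k y_j)/2 and G_j(x,y) := (π²/4) x_j² + y_j² − ∑_{k≠j} M_{jk}(x,y)²/(a_j − a_k) for j = 1, …, 2m. Then the G_j are pairwise in involution with respect to the canonical Poisson bracket: for all j, k and all (x,y) ∈ ℝ^{2m} × ℝ^{2m}, ∑_{l=1}^{2m} ( ∂G_j/∂x_l · ∂G_k/∂y_l − ∂G_j/∂y_l · ∂G_k/∂x_l )(x,y) = 0. -/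

import Mathlib

open Real Finset

/-! The gradients of `G_j` are explicit. In `{G_j, G_k}` with `j ≠ k` the terms `c x_j² + d y_j²`
drop out, since `c (x_j² + x_k²) + d (y_j² + y_k²)` Poisson-commutes with `M_jk`, and what is
left is `2 M_jk ∑_p M_jp M_kp E_p`, where
`E_p = 1/((a_j-a_k)(a_j-a_p)) + 1/((a_k-a_j)(a_k-a_p)) + 1/((a_p-a_j)(a_p-a_k))`
vanishes by partial fractions when `a_j, a_k, a_p` are distinct. -/

theorem hasDerivAt_update_apply {𝕜 ι : Type*} [NontriviallyNormedField 𝕜] [DecidableEq ι]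
    (x : ι → 𝕜) (l p : ι) :
    HasDerivAt (fun t => Function.update x l t p) (if l = p then 1 else 0) (x l) := by
  have := hasDerivAt_pi.mp (hasDerivAt_update x l (x l)) p
  simpa [Pi.single_apply, eq_comm] using this

theorem sum_ite_add_mul_ite_add {ι R : Type*} [Fintype ι] [DecidableEq ι] [CommSemiring R]
    (j k : ι) (A B : R) (u v : ι → R) :
    ∑ l, ((if l = j then A else 0) + u l) * ((if l = k then B else 0) + v l) =
      (if j = k then A * B else 0) + A * v j + B * u k + ∑ l, u l * v l := by
  simp only [add_mul, mul_add, sum_add_distrib, ite_mul, mul_ite, zero_mul, mul_zero, sum_ite_eq',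
    mem_univ, if_true, eq_comm (a := k)]
  ring

theorem inv_sub_mul_inv_sub {K : Type*} [Field K] {a b c : K} (hab : a ≠ b) (hac : a ≠ c)
    (hbc : b ≠ c) : (a - c)⁻¹ * (b - c)⁻¹ = (a - b)⁻¹ * ((b - c)⁻¹ - (a - c)⁻¹) := by
  have := sub_ne_zero.2 hab
  have := sub_ne_zero.2 hac
  have := sub_ne_zero.2 hbc
  field_simp
  ring

noncomputable section

section PoissonBracket

variable {ι : Type*} [DecidableEq ι]

def partialX (F : (ι → ℝ) → (ι → ℝ) → ℝ) (l : ι) (x y : ι → ℝ) : ℝ :=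
  deriv (fun t => F (Function.update x l t) y) (x l)

def partialY (F : (ι → ℝ) → (ι → ℝ) → ℝ) (l : ι) (x y : ι → ℝ) : ℝ :=
  deriv (fun t => F x (Function.update y l t)) (y l)

theorem partialY_eq_partialX_swap (F : (ι → ℝ) → (ι → ℝ) → ℝ) (l : ι) (x y : ι → ℝ) :
    partialY F l x y = partialX (fun x y => F y x) l y x :=
  rfl

variable [Fintype ι]

def poissonBracket (F G : (ι → ℝ) → (ι → ℝ) → ℝ) (x y : ι → ℝ) : ℝ :=
  ∑ l, (partialX F l x y * partialY G l x y - partialY F l x y * partialX G l x y)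

theorem poissonBracket_self (F : (ι → ℝ) → (ι → ℝ) → ℝ) (x y : ι → ℝ) :
    poissonBracket F F x y = 0 :=
  sum_eq_zero fun _ _ => by ring

end PoissonBracket

section Moser

variable {ι : Type*}

def angularMomentum (x y : ι → ℝ) (j k : ι) : ℝ :=
  (x j * y k - x k * y j) / 2

@[simp]
theorem angularMomentum_self (x y : ι → ℝ) (j : ι) : angularMomentum x y j j = 0 := by
  simp [angularMomentum]

theorem angularMomentum_swap (x y : ι → ℝ) (j k : ι) :
    angularMomentum y x j k = -angularMomentum x y j k := by
  unfold angularMomentum; ring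

theorem angularMomentum_comm (x y : ι → ℝ) (j k : ι) :
    angularMomentum x y k j = -angularMomentum x y j k := by
  unfold angularMomentum; ring

theorem hasDerivAt_angularMomentum_update [DecidableEq ι] (x y : ι → ℝ) (l j p : ι) :
    HasDerivAt (fun t => angularMomentum (Function.update x l t) y j p)
      (((if l = j then 1 else 0) * y p - (if l = p then 1 else 0) * y j) / 2) (x l) :=
  ((((hasDerivAt_update_apply x l j).mul_const (y p)).sub
    ((hasDerivAt_update_apply x l p).mul_const (y j))).div_const 2)

variable [Fintype ι]

/-- The `p = j` term vanishes (`M_jj = 0`), so summing over all `p` matches the sum over `p ≠ j`. -/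
def moserHamiltonian (a : ι → ℝ) (c d : ℝ) (j : ι) (x y : ι → ℝ) : ℝ :=
  c * x j ^ 2 + d * y j ^ 2 - ∑ p, angularMomentum x y j p ^ 2 / (a j - a p)

theorem moserHamiltonian_swap (a : ι → ℝ) (c d : ℝ) (j : ι) (x y : ι → ℝ) :
    moserHamiltonian a c d j y x = moserHamiltonian a d c j x y := by
  simp only [moserHamiltonian, angularMomentum_swap y x, neg_sq]
  ring

variable [DecidableEq ι]

theorem hasDerivAt_moserHamiltonian_update (a : ι → ℝ) (c d : ℝ) (j : ι) (x y : ι → ℝ) (l : ι) :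
    HasDerivAt (fun t => moserHamiltonian a c d j (Function.update x l t) y)
      ((if l = j then 2 * c * x j - ∑ p, angularMomentum x y j p * y p / (a j - a p) else 0)
        + angularMomentum x y j l * y j / (a j - a l)) (x l) := by
  have h := ((((hasDerivAt_update_apply x l j).pow 2).const_mul c).add_const (d * y j ^ 2)).sub
    (HasDerivAt.fun_sum (u := univ) fun p _ =>
      ((hasDerivAt_angularMomentum_update x y l j p).pow 2).div_const (a j - a p))
  refine h.congr_deriv ?_
  have hterm : ∀ p, 2 * angularMomentum x y j p ^ (2 - 1) *
      (((if l = j then 1 else 0) * y p - (if l = p then 1 else 0) * y j) / 2) / (a j - a p) =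
      (if l = j then angularMomentum x y j p * y p / (a j - a p) else 0) -
        if l = p then angularMomentum x y j p * y j / (a j - a p) else 0 := by
    intro p
    split_ifs <;> ring
  simp only [Function.update_eq_self, Nat.cast_ofNat, hterm, sum_sub_distrib, sum_ite_eq,
    mem_univ, if_true]
  obtain rfl | hlj := eq_or_ne l j
  · simp only [if_true]
    ring
  · simp [hlj]

theorem partialX_moserHamiltonian (a : ι → ℝ) (c d : ℝ) (j l : ι) (x y : ι → ℝ) :
    partialX (moserHamiltonian a c d j) l x y =
      (if l = j then 2 * c * x j - ∑ p, angularMomentum x y j p * y p / (a j - a p) else 0)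
        + angularMomentum x y j l * y j / (a j - a l) :=
  (hasDerivAt_moserHamiltonian_update a c d j x y l).deriv

theorem partialY_moserHamiltonian (a : ι → ℝ) (c d : ℝ) (j l : ι) (x y : ι → ℝ) :
    partialY (moserHamiltonian a c d j) l x y =
      (if l = j then 2 * d * y j + ∑ p, angularMomentum x y j p * x p / (a j - a p) else 0)
        + -(angularMomentum x y j l * x j / (a j - a l)) := by
  have hswap : (fun x y => moserHamiltonian a c d j y x) = moserHamiltonian a d c j :=
    funext₂ fun x y => moserHamiltonian_swap a c d j x y
  rw [partialY_eq_partialX_swap, hswap, partialX_moserHamiltonian]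
  simp only [angularMomentum_swap x y, neg_mul, neg_div, sum_neg_distrib, sub_neg_eq_add]

theorem poissonBracket_moserHamiltonian_eq_sum {j k : ι} (hjk : j ≠ k) (a : ι → ℝ) (c d : ℝ)
    (x y : ι → ℝ) :
    poissonBracket (moserHamiltonian a c d j) (moserHamiltonian a c d k) x y =
      2 * angularMomentum x y j k * ∑ p, angularMomentum x y j p * angularMomentum x y k p *
        ((a j - a k)⁻¹ * ((a j - a p)⁻¹ - (a k - a p)⁻¹) + (a j - a p)⁻¹ * (a k - a p)⁻¹) := by
  set M := angularMomentum x y with hM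
  have hcross_j : x k * ∑ p, M j p * y p / (a j - a p) - y k * ∑ p, M j p * x p / (a j - a p) =
      2 * ∑ p, M j p * M k p * (a j - a p)⁻¹ := by
    rw [mul_sum, mul_sum, mul_sum, ← sum_sub_distrib]
    refine sum_congr rfl fun p _ => ?_
    simp only [M, angularMomentum]
    ring
  have hcross_k : y j * ∑ p, M k p * x p / (a k - a p) - x j * ∑ p, M k p * y p / (a k - a p) =
      -2 * ∑ p, M j p * M k p * (a k - a p)⁻¹ := by
    rw [mul_sum, mul_sum, mul_sum, ← sum_sub_distrib]
    refine sum_congr rfl fun p _ => ?_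
    simp only [M, angularMomentum]
    ring
  have hcross_sum : ∑ l, M j l * x j / (a j - a l) * (M k l * y k / (a k - a l)) -
      ∑ l, M j l * y j / (a j - a l) * (M k l * x k / (a k - a l)) =
      2 * M j k * ∑ p, M j p * M k p * ((a j - a p)⁻¹ * (a k - a p)⁻¹) := by
    rw [mul_sum, ← sum_sub_distrib]
    refine sum_congr rfl fun p _ => ?_
    simp only [M, angularMomentum]
    ring
  have hexpand : poissonBracket (moserHamiltonian a c d j) (moserHamiltonian a c d k) x y =
      2 * M j k * ((a j - a k)⁻¹ * (∑ p, M j p * M k p * (a j - a p)⁻¹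
        - ∑ p, M j p * M k p * (a k - a p)⁻¹) +
        ∑ p, M j p * M k p * ((a j - a p)⁻¹ * (a k - a p)⁻¹)) := by
    rw [poissonBracket, sum_sub_distrib]
    simp only [partialX_moserHamiltonian, partialY_moserHamiltonian]
    rw [sum_ite_add_mul_ite_add, sum_ite_add_mul_ite_add]
    simp only [if_neg hjk, angularMomentum_comm x y j k, show a k - a j = -(a j - a k) by ring,
      div_neg, neg_div, neg_neg, neg_mul, mul_neg, sum_neg_distrib, ← hM]
    linear_combination (M j k * (a j - a k)⁻¹) * (hcross_j + hcross_k) + hcross_sum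
  rw [hexpand, ← sum_sub_distrib, mul_sum, ← sum_add_distrib]
  exact congrArg _ (sum_congr rfl fun p _ => by ring)

theorem poissonBracket_moserHamiltonian {a : ι → ℝ} (ha : Function.Injective a) (c d : ℝ)
    (j k : ι) (x y : ι → ℝ) :
    poissonBracket (moserHamiltonian a c d j) (moserHamiltonian a c d k) x y = 0 := by
  obtain rfl | hjk := eq_or_ne j k
  · exact poissonBracket_self _ x y
  rw [poissonBracket_moserHamiltonian_eq_sum hjk]
  refine mul_eq_zero_of_right _ (sum_eq_zero fun p _ => ?_)
  obtain rfl | hpj := eq_or_ne p j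
  · simp
  obtain rfl | hpk := eq_or_ne p k
  · simp
  rw [inv_sub_mul_inv_sub (ha.ne hjk) (ha.ne hpj.symm) (ha.ne hpk.symm)]
  ring

end Moser

end

theorem jmms_hamiltonians_in_involution (m : ℕ)
    (a : Fin (2 * m) → ℝ) (ha : Function.Injective a)
    (M : (Fin (2 * m) → ℝ) → (Fin (2 * m) → ℝ) → Fin (2 * m) → Fin (2 * m) → ℝ)
    (hM : ∀ x y j k, M x y j k = (x j * y k - x k * y j) / 2)
    (G : Fin (2 * m) → (Fin (2 * m) → ℝ) → (Fin (2 * m) → ℝ) → ℝ)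
    (hG : ∀ j x y, G j x y =
      π ^ 2 / 4 * (x j) ^ 2 + (y j) ^ 2
        - ∑ k ∈ Finset.univ.filter (fun k => k ≠ j), (M x y j k) ^ 2 / (a j - a k)) :
    ∀ (j k : Fin (2 * m)) (x y : Fin (2 * m) → ℝ),
      ∑ l : Fin (2 * m),
        (deriv (fun t => G j (Function.update x l t) y) (x l) *
            deriv (fun t => G k x (Function.update y l t)) (y l)
          - deriv (fun t => G j x (Function.update y l t)) (y l) *
            deriv (fun t => G k (Function.update x l t) y) (x l)) = 0 := by
  have hG' : G = moserHamiltonian a (π ^ 2 / 4) 1 := by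
    funext j x y
    have hM' : M x y = angularMomentum x y := funext₂ (hM x y)
    rw [hG, hM', moserHamiltonian, one_mul]
    congr 1
    exact sum_filter_of_ne fun p _ hp hpj => hp (by simp [hpj])
  subst hG'
  exact poissonBracket_moserHamiltonian ha _ _
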